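/- arXiv:1812.00437 — 4 statements merged into one kernel-verified Lean document; each statement's English description precedes it below -/
import Mathlib

section
/- Let m = (m₁,m₂) ∈ ℕ² and let Γ^{(m)}_□ = {γ ∈ ℤ² : 0 ≤ γ₁ ≤ 2m₁, −m₂ < γ₂ ≤ m₂, γ₁+γ₂ even}. Then the system {χ^{(m)}_γ : γ ∈ Γ^{(m)}_□} is an orthogonal basis of the (2m₁+1)m₂-dimensional inner product space (L(I^{(m)}), ⟨·,·⟩_w), with norms ‖χ^{(m)}_γ‖²_w = 1 if γ₁ ∈ {0, 2m₁} and ‖χ^{(m)}_γ‖²_w = 1/2 otherwise. -/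
noncomputable section

/-- The rhodonea curve `ρ^{(m)}_α`. -/
def rho (m₁ m₂ : ℕ) (α : ℝ) (t : ℝ) : ℝ × ℝ :=
  (Real.cos (m₂ * t) * Real.cos (m₁ * t - α * Real.pi),
   Real.cos (m₂ * t) * Real.sin (m₁ * t - α * Real.pi))

/-- The sampling parameters `t^{(m)}_l = l π / (2 m₁ m₂)`. -/
def tSample (m₁ m₂ : ℕ) (l : ℕ) : ℝ := l * Real.pi / (2 * m₁ * m₂)

/-- The set `S^{(m)}(t)` of parameters in `[0, 2π)` hitting the same point as `t`. -/
def Sset (m₁ m₂ : ℕ) (α t : ℝ) : Set ℝ :=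
  {s | s ∈ Set.Ico (0 : ℝ) (2 * Real.pi) ∧ rho m₁ m₂ α s = rho m₁ m₂ α t}

/-- The sample point set `LS^{(m)}_α` along the rhodonea curve. -/
def LSa (m₁ m₂ : ℕ) (α : ℝ) : Set (ℝ × ℝ) :=
  {p | ∃ l : ℕ, l < 4 * m₁ * m₂ ∧ p = rho m₁ m₂ α (tSample m₁ m₂ l)}

/-- The nodal index set `I^{(m)}` as a set. -/
def Idx (m₁ m₂ : ℕ) : Set (ℤ × ℤ) :=
  {i | 0 ≤ i.1 ∧ i.1 ≤ (m₁ : ℤ) ∧ -(2 * (m₂ : ℤ)) < i.2 ∧ i.2 ≤ 2 * (m₂ : ℤ) ∧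
       (i.1 = (m₁ : ℤ) → i.2 ≤ 0) ∧ Even (i.1 + i.2)}

/-- The nodal index set `I^{(m)}` as a finset. -/
def IdxF (m₁ m₂ : ℕ) : Finset (ℤ × ℤ) :=
  (Finset.Icc (0 : ℤ) (m₁ : ℤ) ×ˢ Finset.Ioc (-(2 * (m₂ : ℤ))) (2 * (m₂ : ℤ))).filter
    (fun i => (i.1 = (m₁ : ℤ) → i.2 ≤ 0) ∧ Even (i.1 + i.2))

/-- Radial coordinate `r^{(m₁)}_{i₁} = cos(i₁ π / (2 m₁))`. -/
def rI (m₁ : ℕ) (i₁ : ℤ) : ℝ := Real.cos (i₁ * Real.pi / (2 * m₁))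

/-- Angular coordinate `θ^{(m₂)}_{i₂} = i₂ π / (2 m₂)`. -/
def thetaI (m₂ : ℕ) (i₂ : ℤ) : ℝ := i₂ * Real.pi / (2 * m₂)

/-- The rhodonea node `x^{(m)}_i` in Cartesian coordinates. -/
def node (m₁ m₂ : ℕ) (i : ℤ × ℤ) : ℝ × ℝ :=
  (rI m₁ i.1 * Real.cos (thetaI m₂ i.2), rI m₁ i.1 * Real.sin (thetaI m₂ i.2))

/-- The rhodonea node set `LS^{(m)}`. -/
def LS (m₁ m₂ : ℕ) : Set (ℝ × ℝ) := node m₁ m₂ '' Idx m₁ m₂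

/-- Chebyshev polynomial of the first kind, `T_n(r) = cos(n arccos r)`. -/
def chebT (n : ℕ) (r : ℝ) : ℝ := Real.cos (n * Real.arccos r)

/-- The closed unit disk `𝔻 ⊆ ℝ²`. -/
def closedDisk : Set (ℝ × ℝ) := {x | x.1 ^ 2 + x.2 ^ 2 ≤ 1}

/-- The weights `w^{(m)}_i`. -/
def wgt (m₁ m₂ : ℕ) (i : ℤ × ℤ) : ℝ :=
  if i.1 = 0 then 1 / (4 * m₁ * m₂) else 2 / (4 * m₁ * m₂)

/-- The discrete basis functions `χ^{(m)}_γ(i)`. -/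
def chi (m₁ m₂ : ℕ) (γ i : ℤ × ℤ) : ℂ :=
  (Real.cos (γ.1 * i.1 * Real.pi / (2 * m₁)) : ℂ) *
    Complex.exp (Complex.I * (γ.2 * i.2 * Real.pi / (2 * m₂)))

/-- The discrete inner product `⟨f, g⟩_w` on `L(I^{(m)})`. -/
def innerW (m₁ m₂ : ℕ) (f g : ℤ × ℤ → ℂ) : ℂ :=
  ∑ i ∈ IdxF m₁ m₂, (wgt m₁ m₂ i : ℂ) * f i * (starRingEnd ℂ) (g i)

/-- The rectangular spectral index set `Γ^{(m)}_□`. -/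
def GammaSq (m₁ m₂ : ℕ) : Finset (ℤ × ℤ) :=
  (Finset.Icc (0 : ℤ) (2 * (m₁ : ℤ)) ×ˢ Finset.Ioc (-(m₂ : ℤ)) (m₂ : ℤ)).filter
    (fun γ => Even (γ.1 + γ.2))

/-- The full frequency box `K^{(m)}`. -/
def KSet (m₁ m₂ : ℕ) : Finset (ℤ × ℤ) :=
  Finset.Icc (0 : ℤ) (2 * (m₁ : ℤ)) ×ˢ Finset.Ioc (-(2 * (m₂ : ℤ))) (2 * (m₂ : ℤ))

/-- The flip (glide-reflection) operator `γ ↦ γ*` on `K^{(m)}`, with second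
coordinate `(γ₂ + 2m₂) mod 4m₂` taken in `(-2m₂, 2m₂]`. -/
def flipOp (m₁ m₂ : ℕ) (γ : ℤ × ℤ) : ℤ × ℤ :=
  (2 * (m₁ : ℤ) - γ.1, if γ.2 ≤ 0 then γ.2 + 2 * (m₂ : ℤ) else γ.2 - 2 * (m₂ : ℤ))

/-- `Γ` is a spectral index set for `I^{(m)}`: a subset of `K^{(m)}` satisfying the
parity condition whose functions `χ^{(m)}_γ` form an orthogonal basis of `L(I^{(m)})`. -/
def IsSpectral (m₁ m₂ : ℕ) (Γ : Finset (ℤ × ℤ)) : Prop :=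
  Γ ⊆ KSet m₁ m₂ ∧ (∀ γ ∈ Γ, Even (γ.1 + γ.2)) ∧
  (∀ γ ∈ Γ, ∀ γ' ∈ Γ, γ ≠ γ' → innerW m₁ m₂ (chi m₁ m₂ γ) (chi m₁ m₂ γ') = 0) ∧
  LinearIndependent ℂ (fun γ : ↥Γ => fun i : ↥(IdxF m₁ m₂) => chi m₁ m₂ γ.1 i.1) ∧
  Submodule.span ℂ
    (Set.range (fun γ : ↥Γ => fun i : ↥(IdxF m₁ m₂) => chi m₁ m₂ γ.1 i.1)) = ⊤

/-- The real discrete basis functions `χ^{(m)}_{ℛ,γ}(i)` (for `γ ∈ Γ`). -/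
def chiR (m₁ m₂ : ℕ) (Γ : Finset (ℤ × ℤ)) (γ i : ℤ × ℤ) : ℝ :=
  Real.cos (γ.1 * i.1 * Real.pi / (2 * m₁)) *
    (if ((γ.1, -γ.2) ∈ Γ ∧ 0 ≤ γ.2) ∨ ((γ.1, -γ.2) ∉ Γ ∧ γ.1 ≤ (m₁ : ℤ))
     then Real.cos (γ.2 * i.2 * Real.pi / (2 * m₂))
     else Real.sin (γ.2 * i.2 * Real.pi / (2 * m₂)))

/-- The Chebyshev–Fourier basis functions `X_γ(r, θ) = T_{γ₁}(r) e^{i γ₂ θ}`. -/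
def Xfun (γ : ℤ × ℤ) (p : ℝ × ℝ) : ℂ :=
  (Real.cos (γ.1 * Real.arccos p.1) : ℂ) * Complex.exp (Complex.I * (γ.2 * p.2))

/-- The real Chebyshev–Fourier basis functions `X_{ℛ,γ}` (for `γ ∈ Γ`). -/
def XRfun (m₁ : ℕ) (Γ : Finset (ℤ × ℤ)) (γ : ℤ × ℤ) (p : ℝ × ℝ) : ℝ :=
  Real.cos (γ.1 * Real.arccos p.1) *
    (if ((γ.1, -γ.2) ∈ Γ ∧ 0 ≤ γ.2) ∨ ((γ.1, -γ.2) ∉ Γ ∧ γ.1 ≤ (m₁ : ℤ))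
     then Real.cos (γ.2 * p.2) else Real.sin (γ.2 * p.2))

/-- The Lagrange functions `L^{(m)}_i`. -/
def Lag (m₁ m₂ : ℕ) (Γ : Finset (ℤ × ℤ)) (i : ℤ × ℤ) (p : ℝ × ℝ) : ℂ :=
  (wgt m₁ m₂ i : ℂ) *
    ∑ γ ∈ Γ, ((starRingEnd ℂ) (chi m₁ m₂ γ i) /
      innerW m₁ m₂ (chi m₁ m₂ γ) (chi m₁ m₂ γ)) * Xfun γ p

/-- The complex-valued version of `X_{ℛ,γ}`. -/
def XRc (m₁ : ℕ) (Γ : Finset (ℤ × ℤ)) (γ : ℤ × ℤ) (p : ℝ × ℝ) : ℂ :=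
  (XRfun m₁ Γ γ p : ℂ)

/-- The real Lagrange functions `L^{(m)}_{ℛ,i}`. -/
def LagR (m₁ m₂ : ℕ) (Γ : Finset (ℤ × ℤ)) (i : ℤ × ℤ) (p : ℝ × ℝ) : ℂ :=
  (wgt m₁ m₂ i : ℂ) *
    ∑ γ ∈ Γ, ((chiR m₁ m₂ Γ γ i /
        (∑ j ∈ IdxF m₁ m₂, wgt m₁ m₂ j * chiR m₁ m₂ Γ γ j ^ 2) : ℝ) : ℂ) * XRc m₁ Γ γ p

end

/-!
Split the weighted sum row by row. In every row `i₂` runs over one parity class of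
`(-2m₂, 2m₂]` (of `(-2m₂, 0]` on the last row `i₁ = m₁`), so the `i₂`-sum is a sum of powers
of the `4m₂`-th root of unity `ζ = exp (2πi / 4m₂) ^ (γ₂ - γ₂')` along a progression of step 2,
which vanishes unless `γ₂ = γ₂'`. The exception is the last row when `γ₂ - γ₂'` is odd; there
the factor `cos (γ₁ π / 2) cos (γ₁' π / 2)` vanishes instead, since `γ₁ + γ₁'` is odd.

When `γ₂ = γ₂'`, row lengths and weights combine to `1, 2, …, 2, 1` (over `2m₁`), which unfolds
the `i₁`-sum over `[0, m₁]` into a sum over `(-m₁, m₁]` of the even function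
`cos (γ₁ i₁ π / 2m₁) cos (γ₁' i₁ π / 2m₁)`; product-to-sum reduces it to root-of-unity sums again.
Orthogonality with nonzero norms gives linear independence, and then `#Γ = #I = (2m₁ + 1) m₂`
gives spanning.
-/

open Finset Complex
open scoped Real ComplexConjugate

section RootsOfUnity

variable {K : Type*} [Field K] [DecidableEq K]

theorem sum_Ioc_eq_sum_range {M : Type*} [AddCommMonoid M] (f : ℤ → M) (s : ℤ) (N : ℕ) :
    ∑ k ∈ Ioc s (s + N), f k = ∑ j ∈ range N, f (s + 1 + j) := by
  refine sum_nbij' (fun k => (k - s - 1).toNat) (fun j => s + 1 + j) ?_ ?_ ?_ ?_ ?_ <;>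
    intros <;> simp_all <;> omega

theorem sum_Ioc_zpow_eq_ite {ζ : K} {N : ℕ} (hζ : ζ ^ N = 1) (s : ℤ) :
    ∑ k ∈ Ioc s (s + N), ζ ^ k = if ζ = 1 then (N : K) else 0 := by
  obtain rfl | hN := N.eq_zero_or_pos
  · simp
  split_ifs with h1
  · simp [h1]
  · have hζ0 : ζ ≠ 0 := by rintro rfl; simp [hN.ne'] at hζ
    simp only [sum_Ioc_eq_sum_range, zpow_add₀ hζ0, zpow_natCast, ← mul_sum,
      geom_sum_eq h1, hζ, sub_self, zero_div, mul_zero]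

theorem sum_Ioc_filter_even_zpow [NeZero (2 : K)] {ζ : K} {N : ℕ} (hζ : ζ ^ (2 * N) = 1)
    (hζ' : ζ ≠ -1) (L p : ℤ) :
    ∑ k ∈ Ioc L (L + 2 * N) with Even (p + k), ζ ^ k = if ζ = 1 then (N : K) else 0 := by
  have hsum := sum_Ioc_zpow_eq_ite hζ L
  have hsum' := sum_Ioc_zpow_eq_ite (ζ := -ζ) (by rw [neg_pow, hζ, pow_mul]; simp) L
  have hind : ∀ k : ℤ, (if Even (p + k) then ζ ^ k else 0) * 2 = ζ ^ k + (-1) ^ p * (-ζ) ^ k := by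
    intro k
    rw [neg_eq_neg_one_mul ζ, mul_zpow, ← mul_assoc, ← zpow_add₀ (by simp)]
    rcases Int.even_or_odd (p + k) with h | h
    · simp only [h, ↓reduceIte, h.neg_one_zpow, one_mul]; ring
    · simp [Int.not_even_iff_odd.mpr h, h.neg_one_zpow]
  rw [sum_filter, ← mul_left_inj' (two_ne_zero (α := K)), sum_mul, sum_congr rfl fun k _ => hind k,
    sum_add_distrib, ← mul_sum]
  push_cast at hsum hsum'
  have hneg : -ζ ≠ 1 := by contrapose! hζ'; linear_combination -hζ'
  rw [hsum, hsum', if_neg hneg]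
  split_ifs <;> ring

theorem card_Ioc_filter_even (L p : ℤ) (N : ℕ) : #{k ∈ Ioc L (L + 2 * N) | Even (p + k)} = N := by
  have h := sum_Ioc_filter_even_zpow (K := ℚ) (ζ := 1) (N := N) (by simp) (by norm_num) L p
  simp only [one_zpow, sum_const, nsmul_eq_mul, mul_one, if_true] at h
  exact_mod_cast h

end RootsOfUnity

theorem sum_Ioc_neg_self_of_even {M : Type*} [AddCommMonoid M] {f : ℤ → M} (hf : ∀ k, f (-k) = f k)
    (n : ℕ) :
    ∑ k ∈ Ioc (-(n : ℤ)) n, f k = ∑ k ∈ Ico 0 (n : ℤ), f k + ∑ k ∈ Ioc 0 (n : ℤ), f k := by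
  rw [← Ioc_union_Ioc_eq_Ioc (b := 0) (by omega) (by omega),
    sum_union (Ioc_disjoint_Ioc_of_le le_rfl)]
  congr 1
  refine sum_nbij' (fun k => -k) (fun k => -k) (fun k hk => ?_) (fun k hk => ?_) (by simp) (by simp)
    fun k _ => (hf k).symm <;> simp only [mem_Ioc, mem_Ico] at hk ⊢ <;> omega

theorem isPrimitiveRoot_exp_two_pi_I_div_four_mul (n : ℕ) (hn : n ≠ 0) :
    IsPrimitiveRoot (exp (2 * π * I / (4 * n))) (4 * n) := by
  simpa using Complex.isPrimitiveRoot_exp (4 * n) (by positivity)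

theorem sum_Ioc_cos_int_mul {n : ℕ} (hn : n ≠ 0) {c : ℤ} (hc : Even c) :
    ∑ k ∈ Ioc (-(n : ℤ)) n, (Real.cos (c * k * π / (2 * n)) : ℂ) =
      if (4 * n : ℤ) ∣ c then (2 * n : ℂ) else 0 := by
  set ω := exp (2 * π * I / (4 * n))
  have hω : IsPrimitiveRoot ω (4 * n) := isPrimitiveRoot_exp_two_pi_I_div_four_mul n hn
  have hcos : ∀ k : ℤ,
      (Real.cos (c * k * π / (2 * n)) : ℂ) = ((ω ^ c) ^ k + (ω ^ (-c)) ^ k) / 2 := by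
    intro k
    rw [ofReal_cos, Complex.cos, ← zpow_mul, ← zpow_mul, ← exp_int_mul, ← exp_int_mul]
    congr 3 <;> push_cast <;> field_simp <;> ring
  have hroot : ∀ d : ℤ, Even d → (ω ^ d) ^ (2 * n) = 1 := by
    rintro d ⟨e, rfl⟩
    rw [← zpow_natCast, ← zpow_mul, hω.zpow_eq_one_iff_dvd]
    exact ⟨e, by push_cast; ring⟩
  have hIoc : Ioc (-(n : ℤ)) n = Ioc (-(n : ℤ)) (-n + (2 * n : ℕ)) := by congr 1; push_cast; ring
  rw [sum_congr rfl fun k _ => hcos k, ← sum_div, sum_add_distrib, hIoc,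
    sum_Ioc_zpow_eq_ite (hroot c hc), sum_Ioc_zpow_eq_ite (hroot (-c) hc.neg)]
  simp only [hω.zpow_eq_one_iff_dvd, Int.dvd_neg]
  push_cast
  split_ifs <;> ring

theorem sum_Ioc_cos_mul_cos {n : ℕ} (hn : n ≠ 0) {a b : ℤ} (hab : Even (a + b)) :
    ∑ k ∈ Ioc (-(n : ℤ)) n, (Real.cos (a * k * π / (2 * n)) * Real.cos (b * k * π / (2 * n)) : ℂ) =
      n * ((if (4 * n : ℤ) ∣ a + b then 1 else 0) + (if (4 * n : ℤ) ∣ a - b then 1 else 0)) := by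
  have hprod : ∀ k : ℤ, (Real.cos (a * k * π / (2 * n)) * Real.cos (b * k * π / (2 * n)) : ℂ) =
      ((Real.cos ((a + b : ℤ) * k * π / (2 * n)) : ℂ) +
        Real.cos ((a - b : ℤ) * k * π / (2 * n))) / 2 := by
    intro k
    set x := a * k * π / (2 * n)
    set y := b * k * π / (2 * n)
    rw [show ((a + b : ℤ) : ℝ) * k * π / (2 * n) = x + y by push_cast; ring,
      show ((a - b : ℤ) : ℝ) * k * π / (2 * n) = x - y by push_cast; ring,
      Real.cos_add, Real.cos_sub]
    push_cast; ring
  have hsub : Even (a - b) := by simpa [Int.even_sub, Int.even_add] using hab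
  rw [sum_congr rfl fun k _ => hprod k, ← sum_div, sum_add_distrib, sum_Ioc_cos_int_mul hn hab,
    sum_Ioc_cos_int_mul hn hsub]
  split_ifs <;> ring

noncomputable def nodeRow (m₁ m₂ : ℕ) (i₁ : ℤ) : Finset ℤ :=
  {i₂ ∈ Ioc (-(2 * (m₂ : ℤ))) (2 * m₂) | (i₁ = m₁ → i₂ ≤ 0) ∧ Even (i₁ + i₂)}

theorem sum_IdxF_eq_sum_nodeRow {M : Type*} [AddCommMonoid M] (m₁ m₂ : ℕ) (f : ℤ × ℤ → M) :
    ∑ i ∈ IdxF m₁ m₂, f i = ∑ i₁ ∈ Icc 0 (m₁ : ℤ), ∑ i₂ ∈ nodeRow m₁ m₂ i₁, f (i₁, i₂) := by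
  rw [IdxF, sum_filter, sum_product]
  exact sum_congr rfl fun i₁ _ => (sum_filter _ _).symm

theorem nodeRow_of_ne {m₁ : ℕ} (m₂ : ℕ) {i₁ : ℤ} (h : i₁ ≠ m₁) :
    nodeRow m₁ m₂ i₁ =
      {i₂ ∈ Ioc (-(2 * (m₂ : ℤ))) (-(2 * m₂) + 2 * (2 * m₂ : ℕ)) | Even (i₁ + i₂)} := by
  ext i₂
  simp only [nodeRow, mem_filter, mem_Ioc, h, false_imp_iff, true_and]
  push_cast
  constructor <;> rintro ⟨⟨h1, h2⟩, h3⟩ <;> exact ⟨⟨h1, by linarith⟩, h3⟩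

theorem nodeRow_self (m₁ m₂ : ℕ) :
    nodeRow m₁ m₂ m₁ =
      {i₂ ∈ Ioc (-(2 * (m₂ : ℤ))) (-(2 * m₂) + 2 * m₂) | Even ((m₁ : ℤ) + i₂)} := by
  ext i₂
  simp only [nodeRow, mem_filter, mem_Ioc, forall_const]
  grind

theorem card_nodeRow (m₁ m₂ : ℕ) (i₁ : ℤ) :
    #(nodeRow m₁ m₂ i₁) = if i₁ = m₁ then m₂ else 2 * m₂ := by
  split_ifs with h
  · rw [h, nodeRow_self, card_Ioc_filter_even]
  · rw [nodeRow_of_ne m₂ h, card_Ioc_filter_even]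

theorem card_IdxF (m₁ m₂ : ℕ) : #(IdxF m₁ m₂) = (2 * m₁ + 1) * m₂ := by
  rw [card_eq_sum_ones, sum_IdxF_eq_sum_nodeRow,
    sum_congr rfl fun i₁ _ => (card_eq_sum_ones _).symm,
    sum_congr rfl fun i₁ _ => card_nodeRow m₁ m₂ i₁, sum_ite, filter_eq', filter_ne',
    if_pos (by simp)]
  simp only [sum_const, card_singleton, smul_eq_mul, one_mul, Icc_erase_right, Int.card_Ico,
    sub_zero, Int.toNat_natCast]
  ring

theorem card_GammaSq (m₁ m₂ : ℕ) : #(GammaSq m₁ m₂) = (2 * m₁ + 1) * m₂ := by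
  have hIoc : Ioc (-(m₂ : ℤ)) m₂ = Ioc (-(m₂ : ℤ)) (-m₂ + 2 * m₂) := by congr 1; ring
  rw [GammaSq, card_filter, sum_product, hIoc]
  simp only [← card_filter, card_Ioc_filter_even, sum_const, Int.card_Icc, smul_eq_mul, sub_zero]
  norm_cast

theorem chi_eq_cos_mul_zpow (m₁ m₂ : ℕ) (γ i : ℤ × ℤ) :
    chi m₁ m₂ γ i =
      (Real.cos (γ.1 * i.1 * π / (2 * m₁)) : ℂ) * exp (2 * π * I / (4 * m₂)) ^ (γ.2 * i.2) := by
  rw [chi, ← exp_int_mul]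
  congr 2
  push_cast
  ring

theorem conj_exp_two_pi_I_div_zpow (n : ℕ) (k : ℤ) :
    conj (exp (2 * π * I / (4 * n)) ^ k) = exp (2 * π * I / (4 * n)) ^ (-k) := by
  rw [map_zpow₀, ← exp_conj, zpow_neg, ← inv_zpow, ← exp_neg]
  congr 2
  simp only [map_div₀, map_mul, map_ofNat, conj_ofReal, conj_I, mul_neg, map_natCast]
  ring

theorem wgt_mul_chi_mul_conj_chi (m₁ m₂ : ℕ) (γ γ' i : ℤ × ℤ) :
    (wgt m₁ m₂ i : ℂ) * chi m₁ m₂ γ i * conj (chi m₁ m₂ γ' i) =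
      wgt m₁ m₂ i *
        (Real.cos (γ.1 * i.1 * π / (2 * m₁)) * Real.cos (γ'.1 * i.1 * π / (2 * m₁)) : ℂ) *
        (exp (2 * π * I / (4 * m₂)) ^ (γ.2 - γ'.2)) ^ i.2 := by
  rw [chi_eq_cos_mul_zpow, chi_eq_cos_mul_zpow, map_mul, conj_ofReal, conj_exp_two_pi_I_div_zpow,
    ← zpow_mul, sub_mul, sub_eq_add_neg, zpow_add₀ (exp_ne_zero _), ← neg_mul]
  ring

theorem innerW_chi_chi_eq_sum_nodeRow (m₁ m₂ : ℕ) (γ γ' : ℤ × ℤ) :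
    innerW m₁ m₂ (chi m₁ m₂ γ) (chi m₁ m₂ γ') =
      ∑ i₁ ∈ Icc 0 (m₁ : ℤ), wgt m₁ m₂ (i₁, 0) *
        (Real.cos (γ.1 * i₁ * π / (2 * m₁)) * Real.cos (γ'.1 * i₁ * π / (2 * m₁)) : ℂ) *
          ∑ i₂ ∈ nodeRow m₁ m₂ i₁, (exp (2 * π * I / (4 * m₂)) ^ (γ.2 - γ'.2)) ^ i₂ := by
  rw [innerW, sum_IdxF_eq_sum_nodeRow]
  refine sum_congr rfl fun i₁ _ => ?_
  rw [mul_sum]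
  exact sum_congr rfl fun i₂ _ => wgt_mul_chi_mul_conj_chi m₁ m₂ γ γ' (i₁, i₂)

theorem cos_mul_cos_eq_zero_of_odd {m₁ : ℕ} (hm₁ : m₁ ≠ 0) {a b : ℤ} (hab : Odd (a + b)) :
    Real.cos (a * m₁ * π / (2 * m₁)) * Real.cos (b * m₁ * π / (2 * m₁)) = 0 := by
  have hcos : ∀ c : ℤ, Odd c → Real.cos (c * m₁ * π / (2 * m₁)) = 0 := by
    rintro c ⟨k, rfl⟩
    rw [Real.cos_eq_zero_iff]
    exact ⟨k, by push_cast; field_simp⟩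
  rcases Int.even_or_odd a with ha | ha
  · have hb : Odd b := by rw [Int.odd_iff] at hab ⊢; rw [Int.even_iff] at ha; omega
    rw [hcos b hb, mul_zero]
  · rw [hcos a ha, zero_mul]

theorem innerW_chi_chi_of_snd_ne {m₁ m₂ : ℕ} (hm₁ : m₁ ≠ 0) {γ γ' : ℤ × ℤ}
    (hγ : Even (γ.1 + γ.2)) (hγ' : Even (γ'.1 + γ'.2)) (hne : γ.2 ≠ γ'.2)
    (hlt : |γ.2 - γ'.2| < 2 * m₂) :
    innerW m₁ m₂ (chi m₁ m₂ γ) (chi m₁ m₂ γ') = 0 := by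
  have hm₂ : m₂ ≠ 0 := by rintro rfl; exact (abs_nonneg _).not_gt (by simpa using hlt)
  have hω := isPrimitiveRoot_exp_two_pi_I_div_four_mul m₂ hm₂
  set ζ := exp (2 * π * I / (4 * m₂)) ^ (γ.2 - γ'.2)
  have hζ_pow : ∀ n : ℕ, ζ ^ n = 1 ↔ (4 * m₂ : ℤ) ∣ (γ.2 - γ'.2) * n := by
    intro n
    rw [← zpow_natCast, ← zpow_mul, hω.zpow_eq_one_iff_dvd]
    push_cast; rfl
  have hζ_sq : ζ ^ 2 ≠ 1 := by
    rw [Ne, hζ_pow]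
    rintro ⟨c, hc⟩
    exact hne (sub_eq_zero.mp (Int.eq_zero_of_abs_lt_dvd ⟨c, by push_cast at hc; linarith⟩ hlt))
  have hζ_ne_one : ζ ≠ 1 := by rintro h; simp [h] at hζ_sq
  have hζ_ne_neg_one : ζ ≠ -1 := by rintro h; simp [h] at hζ_sq
  rw [innerW_chi_chi_eq_sum_nodeRow]
  refine sum_eq_zero fun i₁ _ => ?_
  rcases ne_or_eq i₁ m₁ with hne₁ | rfl
  · rw [nodeRow_of_ne m₂ hne₁, sum_Ioc_filter_even_zpow _ hζ_ne_neg_one, if_neg hζ_ne_one, mul_zero]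
    rw [hζ_pow]
    exact ⟨γ.2 - γ'.2, by push_cast; ring⟩
  rcases Int.even_or_odd (γ.2 - γ'.2) with ⟨c, hc⟩ | hodd
  · rw [nodeRow_self, sum_Ioc_filter_even_zpow _ hζ_ne_neg_one, if_neg hζ_ne_one, mul_zero]
    rw [hζ_pow]
    exact ⟨c, by rw [hc]; push_cast; ring⟩
  · have : Odd (γ.1 + γ'.1) := by
      rw [Int.odd_iff] at hodd ⊢; rw [Int.even_iff] at hγ hγ'; omega
    rw [Int.cast_natCast, ← ofReal_mul, cos_mul_cos_eq_zero_of_odd hm₁ this]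
    simp

theorem innerW_chi_chi_of_snd_eq {m₁ m₂ : ℕ} (hm₁ : m₁ ≠ 0) (hm₂ : m₂ ≠ 0) {γ γ' : ℤ × ℤ}
    (heven : Even (γ.1 + γ'.1)) (heq : γ.2 = γ'.2) :
    innerW m₁ m₂ (chi m₁ m₂ γ) (chi m₁ m₂ γ') =
      ((if (4 * m₁ : ℤ) ∣ γ.1 + γ'.1 then 1 else 0) +
        (if (4 * m₁ : ℤ) ∣ γ.1 - γ'.1 then 1 else 0)) / 2 := by
  set f : ℤ → ℂ := fun k =>
    (Real.cos (γ.1 * k * π / (2 * m₁)) * Real.cos (γ'.1 * k * π / (2 * m₁)) : ℂ)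
  have hf : ∀ k, f (-k) = f k := fun k => by
    simp only [f, Int.cast_neg, mul_neg, neg_mul, neg_div, Real.cos_neg]
  have hterm : ∀ i₁ ∈ Icc 0 (m₁ : ℤ),
      wgt m₁ m₂ (i₁, 0) * f i₁ * ((if i₁ = m₁ then m₂ else 2 * m₂ : ℕ) : ℂ) =
        ((if i₁ ≠ m₁ then f i₁ else 0) + (if i₁ ≠ 0 then f i₁ else 0)) / (2 * m₁) := by
    intro i₁ _
    simp only [wgt]
    split_ifs <;> push_cast <;> field_simp <;> first | (exfalso; omega) | ring
  rw [innerW_chi_chi_eq_sum_nodeRow, heq, sub_self, zpow_zero]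
  simp only [one_zpow, sum_const, card_nodeRow, nsmul_eq_mul, mul_one]
  rw [sum_congr rfl hterm, ← sum_div, sum_add_distrib, ← sum_filter, ← sum_filter, filter_ne',
    filter_ne', Icc_erase_right, Icc_erase_left, ← sum_Ioc_neg_self_of_even hf,
    sum_Ioc_cos_mul_cos hm₁ heven]
  field_simp

theorem four_mul_dvd_add_iff {M a b : ℤ} (hM : 0 < M) (ha₀ : 0 ≤ a) (ha : a ≤ 2 * M) (hb₀ : 0 ≤ b)
    (hb : b ≤ 2 * M) : 4 * M ∣ a + b ↔ a = 0 ∧ b = 0 ∨ a = 2 * M ∧ b = 2 * M := by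
  constructor
  · rintro ⟨c, hc⟩
    have : 0 ≤ c := by nlinarith
    have : c ≤ 1 := by nlinarith
    interval_cases c <;> omega
  · rintro (⟨rfl, rfl⟩ | ⟨rfl, rfl⟩)
    · simp
    · exact ⟨1, by ring⟩

theorem innerW_chi_chi_eq_zero {m₁ m₂ : ℕ} (hm₁ : m₁ ≠ 0) {γ γ' : ℤ × ℤ} (hγ : γ ∈ GammaSq m₁ m₂)
    (hγ' : γ' ∈ GammaSq m₁ m₂) (hne : γ ≠ γ') :
    innerW m₁ m₂ (chi m₁ m₂ γ) (chi m₁ m₂ γ') = 0 := by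
  simp only [GammaSq, mem_filter, mem_product, mem_Icc, mem_Ioc] at hγ hγ'
  obtain ⟨⟨⟨hγ₁, hγ₁'⟩, hγ₂, hγ₂'⟩, hγe⟩ := hγ
  obtain ⟨⟨⟨hγ'₁, hγ'₁'⟩, hγ'₂, hγ'₂'⟩, hγ'e⟩ := hγ'
  by_cases h₂ : γ.2 = γ'.2
  · have h₁ : γ.1 ≠ γ'.1 := fun h₁ => hne (Prod.ext h₁ h₂)
    have heven : Even (γ.1 + γ'.1) := by
      rw [Int.even_iff] at hγe hγ'e ⊢; omega
    have hm₁' : (0 : ℤ) < m₁ := by omega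
    rw [innerW_chi_chi_of_snd_eq hm₁ (by omega) heven h₂,
      if_neg (by rw [four_mul_dvd_add_iff hm₁' hγ₁ hγ₁' hγ'₁ hγ'₁']; omega),
      if_neg fun hdvd =>
        h₁ (sub_eq_zero.mp (Int.eq_zero_of_abs_lt_dvd hdvd (by rw [abs_lt]; omega)))]
    simp
  · exact innerW_chi_chi_of_snd_ne hm₁ hγe hγ'e h₂ (by rw [abs_lt]; omega)

theorem innerW_chi_self {m₁ m₂ : ℕ} (hm₁ : m₁ ≠ 0) {γ : ℤ × ℤ} (hγ : γ ∈ GammaSq m₁ m₂) :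
    innerW m₁ m₂ (chi m₁ m₂ γ) (chi m₁ m₂ γ) =
      if γ.1 = 0 ∨ γ.1 = 2 * (m₁ : ℤ) then 1 else 1 / 2 := by
  simp only [GammaSq, mem_filter, mem_product, mem_Icc, mem_Ioc] at hγ
  obtain ⟨⟨⟨hγ₁, hγ₁'⟩, hγ₂, hγ₂'⟩, -⟩ := hγ
  rw [innerW_chi_chi_of_snd_eq hm₁ (by omega) (Even.add_self _) rfl, sub_self, if_pos (dvd_zero _)]
  simp only [four_mul_dvd_add_iff (by omega : (0 : ℤ) < m₁) hγ₁ hγ₁' hγ₁ hγ₁', and_self]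
  split_ifs <;> norm_num

theorem linearIndependent_of_sum_mul_conj_eq_zero {ι σ : Type*} [Fintype σ] (w : σ → ℂ)
    {v : ι → σ → ℂ} (hortho : ∀ i j, i ≠ j → ∑ s, w s * v i s * conj (v j s) = 0)
    (hself : ∀ i, ∑ s, w s * v i s * conj (v i s) ≠ 0) : LinearIndependent ℂ v := by
  let B : (σ → ℂ) →ₗ[ℂ] (σ → ℂ) →ₗ⋆[ℂ] ℂ :=
    LinearMap.mk₂'ₛₗ (RingHom.id ℂ) (starRingEnd ℂ) (fun f g => ∑ s, w s * f s * conj (g s))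
      (fun f f' g => by simp only [Pi.add_apply, mul_add, add_mul, sum_add_distrib])
      (fun c f g => by
        simp only [Pi.smul_apply, smul_eq_mul, mul_sum, RingHom.id_apply]
        exact sum_congr rfl fun s _ => by ring)
      (fun f g g' => by simp only [Pi.add_apply, map_add, mul_add, sum_add_distrib])
      (fun c f g => by
        simp only [Pi.smul_apply, smul_eq_mul, map_mul, mul_sum]
        exact sum_congr rfl fun s _ => by ring)
  exact LinearMap.linearIndependent_of_isOrthoᵢ (B := B) hortho hself

theorem linearIndependent_chi {m₁ m₂ : ℕ} (hm₁ : m₁ ≠ 0) :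
    LinearIndependent ℂ
      (fun γ : ↥(GammaSq m₁ m₂) => fun i : ↥(IdxF m₁ m₂) => chi m₁ m₂ γ.1 i.1) := by
  have hsum : ∀ γ γ' : ℤ × ℤ,
      ∑ i : ↥(IdxF m₁ m₂), (wgt m₁ m₂ i.1 : ℂ) * chi m₁ m₂ γ i.1 * conj (chi m₁ m₂ γ' i.1) =
        innerW m₁ m₂ (chi m₁ m₂ γ) (chi m₁ m₂ γ') := fun γ γ' =>
    sum_coe_sort (IdxF m₁ m₂) fun i => (wgt m₁ m₂ i : ℂ) * chi m₁ m₂ γ i * conj (chi m₁ m₂ γ' i)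
  refine linearIndependent_of_sum_mul_conj_eq_zero (fun i => (wgt m₁ m₂ i.1 : ℂ))
    (fun γ γ' hne => ?_) fun γ => ?_
  · rw [hsum]
    exact innerW_chi_chi_eq_zero hm₁ γ.2 γ'.2 (Subtype.coe_injective.ne hne)
  · rw [hsum, innerW_chi_self hm₁ γ.2]
    split_ifs <;> norm_num

theorem span_chi_eq_top {m₁ m₂ : ℕ} (hm₁ : m₁ ≠ 0) :
    Submodule.span ℂ (Set.range
      (fun γ : ↥(GammaSq m₁ m₂) => fun i : ↥(IdxF m₁ m₂) => chi m₁ m₂ γ.1 i.1)) = ⊤ :=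
  (linearIndependent_chi hm₁).span_eq_top_of_card_eq_finrank' <| by
    rw [Module.finrank_fintype_fun_eq_card, Fintype.card_coe, Fintype.card_coe, card_GammaSq,
      card_IdxF]

theorem rectangular_spectral_basis_general (m₁ m₂ : ℕ) (hm₁ : 0 < m₁) :
    (IdxF m₁ m₂).card = (2 * m₁ + 1) * m₂ ∧
    LinearIndependent ℂ
      (fun γ : ↥(GammaSq m₁ m₂) => fun i : ↥(IdxF m₁ m₂) => chi m₁ m₂ γ.1 i.1) ∧
    Submodule.span ℂ (Set.range
      (fun γ : ↥(GammaSq m₁ m₂) => fun i : ↥(IdxF m₁ m₂) => chi m₁ m₂ γ.1 i.1)) = ⊤ ∧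
    (∀ γ ∈ GammaSq m₁ m₂, ∀ γ' ∈ GammaSq m₁ m₂, γ ≠ γ' →
      innerW m₁ m₂ (chi m₁ m₂ γ) (chi m₁ m₂ γ') = 0) ∧
    (∀ γ ∈ GammaSq m₁ m₂,
      innerW m₁ m₂ (chi m₁ m₂ γ) (chi m₁ m₂ γ) =
        if γ.1 = 0 ∨ γ.1 = 2 * (m₁ : ℤ) then 1 else 1 / 2) :=
  ⟨card_IdxF m₁ m₂, linearIndependent_chi hm₁.ne', span_chi_eq_top hm₁.ne',
    fun _ hγ _ hγ' hne => innerW_chi_chi_eq_zero hm₁.ne' hγ hγ' hne,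
    fun _ hγ => innerW_chi_self hm₁.ne' hγ⟩

/-- Theorem 5.2: the system `{χ^{(m)}_γ : γ ∈ Γ^{(m)}_□}` is an orthogonal basis of
the `(2m₁+1)m₂`-dimensional space `(L(I^{(m)}), ⟨·,·⟩_w)`, with the stated norms. -/
theorem rectangular_spectral_basis (m₁ m₂ : ℕ) (hm₁ : 0 < m₁) (hm₂ : 0 < m₂) :
    (IdxF m₁ m₂).card = (2 * m₁ + 1) * m₂ ∧
    LinearIndependent ℂ
      (fun γ : ↥(GammaSq m₁ m₂) => fun i : ↥(IdxF m₁ m₂) => chi m₁ m₂ γ.1 i.1) ∧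
    Submodule.span ℂ (Set.range
      (fun γ : ↥(GammaSq m₁ m₂) => fun i : ↥(IdxF m₁ m₂) => chi m₁ m₂ γ.1 i.1)) = ⊤ ∧
    (∀ γ ∈ GammaSq m₁ m₂, ∀ γ' ∈ GammaSq m₁ m₂, γ ≠ γ' →
      innerW m₁ m₂ (chi m₁ m₂ γ) (chi m₁ m₂ γ') = 0) ∧
    (∀ γ ∈ GammaSq m₁ m₂,
      innerW m₁ m₂ (chi m₁ m₂ γ) (chi m₁ m₂ γ) =
        if γ.1 = 0 ∨ γ.1 = 2 * (m₁ : ℤ) then 1 else 1 / 2) :=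
  rectangular_spectral_basis_general m₁ m₂ hm₁
end

section
/- Let m = (m₁,m₂) ∈ ℕ², let K^{(m)} = {γ ∈ ℤ² : 0 ≤ γ₁ ≤ 2m₁, −2m₂ < γ₂ ≤ 2m₂}, and define the flip operator on K^{(m)} by γ* = (2m₁ − γ₁, (γ₂ + 2m₂) mod 4m₂, taken in (−2m₂, 2m₂]). If γ ∈ K^{(m)} and γ₁ + γ₂ is even, then χ^{(m)}_{γ*}(i) = χ^{(m)}_γ(i) for all i ∈ I^{(m)}. -/

private lemma exp_int_pi_aux (c : ℤ) :
    Complex.exp (Complex.I * ((c : ℂ) * Real.pi)) = (-1 : ℂ) ^ c := by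
  rw [show Complex.I * ((c : ℂ) * Real.pi) = (c : ℂ) * (Real.pi * Complex.I) by ring,
      Complex.exp_int_mul, Complex.exp_pi_mul_I]

private lemma neg_one_zpow_neg_aux (n : ℤ) : (-1 : ℂ) ^ (-n) = (-1 : ℂ) ^ n := by
  have : ((-1 : ℂ) ^ n) * ((-1 : ℂ) ^ n) = 1 := by
    rw [← zpow_add₀ (by norm_num : (-1:ℂ) ≠ 0), show n + n = 2 * n by ring, zpow_mul]
    norm_num
  rw [zpow_neg, inv_eq_of_mul_eq_one_left this]

private lemma cos_flip_aux (n : ℤ) (a : ℝ) :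
    Real.cos ((n : ℝ) * Real.pi - a) = (-1 : ℝ) ^ n * Real.cos a := by
  exact Real.cos_int_mul_pi_sub a n

/-- Equation (5.5): glide-reflection invariance `χ^{(m)}_{γ*} = χ^{(m)}_γ` on
`I^{(m)}` whenever `γ ∈ K^{(m)}` and `γ₁ + γ₂` is even. -/
theorem chi_flip_invariance (m₁ m₂ : ℕ) (hm₁ : 0 < m₁) (hm₂ : 0 < m₂)
    (γ : ℤ × ℤ) (hγ : γ ∈ KSet m₁ m₂) (heven : Even (γ.1 + γ.2)) :
    ∀ i ∈ IdxF m₁ m₂, chi m₁ m₂ (flipOp m₁ m₂ γ) i = chi m₁ m₂ γ i := by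
  intro i hi
  have hie : Even (i.1 + i.2) := by
    simp only [IdxF, Finset.mem_filter] at hi
    exact hi.2.2
  have hm1 : (m₁ : ℝ) ≠ 0 := Nat.cast_ne_zero.mpr hm₁.ne'
  have hm2 : (m₂ : ℝ) ≠ 0 := Nat.cast_ne_zero.mpr hm₂.ne'
  have hm2c : (m₂ : ℂ) ≠ 0 := Nat.cast_ne_zero.mpr hm₂.ne'
  have hone : ((-1:ℂ) ^ i.1) * ((-1:ℂ) ^ i.2) = 1 := by
    rw [← zpow_add₀ (by norm_num : (-1:ℂ) ≠ 0)]
    obtain ⟨k, hk⟩ := hie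
    rw [hk, show k + k = 2 * k by ring, zpow_mul]
    norm_num
  unfold chi flipOp
  have h1 : ((2 * (m₁:ℤ) - γ.1 : ℤ) : ℝ) * (i.1 : ℝ) * Real.pi / (2 * m₁)
      = (i.1 : ℝ) * Real.pi - (γ.1 : ℝ) * (i.1 : ℝ) * Real.pi / (2 * m₁) := by
    push_cast
    field_simp
  push_cast only []
  rw [h1, cos_flip_aux]
  by_cases h : γ.2 ≤ 0
  · simp only [if_pos h]
    have h2 : Complex.I * (((γ.2 + 2 * (m₂:ℤ) : ℤ) : ℂ) * (i.2 : ℂ) * Real.pi / (2 * m₂))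
        = Complex.I * ((γ.2 : ℂ) * (i.2 : ℂ) * Real.pi / (2 * m₂))
          + Complex.I * ((i.2 : ℂ) * Real.pi) := by
      push_cast
      field_simp
    rw [h2, Complex.exp_add, exp_int_pi_aux]
    push_cast
    try simp only [Complex.ofReal_cos]
    linear_combination ((Complex.cos ((γ.1 : ℂ) * (i.1 : ℂ) * Real.pi / (2 * m₁))) *
      Complex.exp (Complex.I * ((γ.2 : ℂ) * (i.2 : ℂ) * Real.pi / (2 * m₂)))) * hone
  · simp only [if_neg h]
    have h2 : Complex.I * (((γ.2 - 2 * (m₂:ℤ) : ℤ) : ℂ) * (i.2 : ℂ) * Real.pi / (2 * m₂))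
        = Complex.I * ((γ.2 : ℂ) * (i.2 : ℂ) * Real.pi / (2 * m₂))
          + Complex.I * (((-i.2 : ℤ) : ℂ) * Real.pi) := by
      push_cast
      field_simp
      ring
    rw [h2, Complex.exp_add, exp_int_pi_aux, neg_one_zpow_neg_aux]
    push_cast
    try simp only [Complex.ofReal_cos]
    linear_combination ((Complex.cos ((γ.1 : ℂ) * (i.1 : ℂ) * Real.pi / (2 * m₁))) *
      Complex.exp (Complex.I * ((γ.2 : ℂ) * (i.2 : ℂ) * Real.pi / (2 * m₂)))) * hone
end

section
/- Let m = (m₁,m₂) ∈ ℕ², let Γ^{(m)} be a spectral index set for I^{(m)}, and let f : I^{(m)} → ℂ. Then there exists a unique function P^{(m)}_f in Π^{(m)} = span{X_γ : γ ∈ Γ^{(m)}} satisfying the interpolation conditions P^{(m)}_f(r^{(m₁)}_{i₁}, θ^{(m₂)}_{i₂}) = f(i) for all i ∈ I^{(m)}; it is given by P^{(m)}_f(r,θ) = Σ_{i ∈ I^{(m)}} f(i) L^{(m)}_i(r,θ), where L^{(m)}_i(r,θ) = w^{(m)}_i Σ_{γ ∈ Γ^{(m)}} (conj(χ^{(m)}_γ(i))/‖χ^{(m)}_γ‖²_w)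 X_γ(r,θ); moreover the Lagrange functions {L^{(m)}_i : i ∈ I^{(m)}} form a basis of Π^{(m)}. -/
section Aux

open Finset Complex

lemma node_eval (m₁ m₂ : ℕ) (hm₁ : 0 < m₁) (γ : ℤ × ℤ)
    (i : ℤ × ℤ) (hi : i ∈ IdxF m₁ m₂) :
    Xfun γ (rI m₁ i.1, thetaI m₂ i.2) = chi m₁ m₂ γ i := by
  obtain ⟨hi1, hi2⟩ := Finset.mem_filter.mp hi
  obtain ⟨h1, h2⟩ := Finset.mem_product.mp hi1
  rw [Finset.mem_Icc] at h1
  have hm : (0:ℝ) < m₁ := by exact_mod_cast hm₁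
  have hi0 : (0:ℝ) ≤ (i.1:ℝ) := by exact_mod_cast h1.1
  have hile : (i.1:ℝ) ≤ (m₁:ℝ) := by exact_mod_cast h1.2
  have h0 : (0:ℝ) ≤ (i.1:ℝ) * Real.pi / (2 * m₁) := by positivity
  have hle : (i.1:ℝ) * Real.pi / (2 * m₁) ≤ Real.pi := by
    rw [div_le_iff₀ (by positivity)]
    nlinarith [Real.pi_pos]
  have harc : Real.arccos (rI m₁ i.1) = (i.1:ℝ) * Real.pi / (2 * m₁) :=
    Real.arccos_cos h0 hle
  unfold Xfun chi thetaI
  simp only [harc]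
  congr 1
  · norm_cast
    congr 1
    push_cast
    ring
  · congr 1
    push_cast
    ring

lemma wgt_pos (m₁ m₂ : ℕ) (hm₁ : 0 < m₁) (hm₂ : 0 < m₂) (i : ℤ × ℤ) :
    0 < wgt m₁ m₂ i := by
  unfold wgt
  have h1 : (0:ℝ) < m₁ := by exact_mod_cast hm₁
  have h2 : (0:ℝ) < m₂ := by exact_mod_cast hm₂
  split <;> positivity

set_option maxHeartbeats 1000000 in
lemma norm_ne_zero (m₁ m₂ : ℕ) (hm₁ : 0 < m₁) (hm₂ : 0 < m₂)
    (Γ : Finset (ℤ × ℤ)) (hΓ : IsSpectral m₁ m₂ Γ) (γ : ℤ × ℤ) (hγ : γ ∈ Γ) :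
    innerW m₁ m₂ (chi m₁ m₂ γ) (chi m₁ m₂ γ) ≠ 0 := by
  have hne : (fun i : ↥(IdxF m₁ m₂) => chi m₁ m₂ γ i.1) ≠ 0 :=
    LinearIndependent.ne_zero
      (v := fun γ : ↥Γ => fun i : ↥(IdxF m₁ m₂) => chi m₁ m₂ γ.1 i.1)
      ⟨γ, hγ⟩ hΓ.2.2.2.1
  obtain ⟨i, hi⟩ := Function.ne_iff.mp hne
  have hizero : chi m₁ m₂ γ i.1 ≠ 0 := by simpa using hi
  have hrw : innerW m₁ m₂ (chi m₁ m₂ γ) (chi m₁ m₂ γ) =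
      ((∑ j ∈ IdxF m₁ m₂, wgt m₁ m₂ j * Complex.normSq (chi m₁ m₂ γ j) : ℝ) : ℂ) := by
    unfold innerW
    rw [Complex.ofReal_sum]
    refine Finset.sum_congr rfl fun j _ => ?_
    rw [mul_assoc, Complex.mul_conj, Complex.ofReal_mul]
  rw [hrw]
  have hpos : 0 < ∑ j ∈ IdxF m₁ m₂, wgt m₁ m₂ j * Complex.normSq (chi m₁ m₂ γ j) := by
    apply Finset.sum_pos'
    · intro j _
      exact mul_nonneg (wgt_pos m₁ m₂ hm₁ hm₂ j).le (Complex.normSq_nonneg _)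
    · exact ⟨i.1, i.2, mul_pos (wgt_pos m₁ m₂ hm₁ hm₂ i.1)
        (Complex.normSq_pos.mpr hizero)⟩
  exact_mod_cast hpos.ne'

lemma coeff_eq (m₁ m₂ : ℕ) (hm₁ : 0 < m₁) (hm₂ : 0 < m₂)
    (Γ : Finset (ℤ × ℤ)) (hΓ : IsSpectral m₁ m₂ Γ) (f : ℤ × ℤ → ℂ) :
    ∀ i ∈ IdxF m₁ m₂,
      ∑ γ ∈ Γ, (innerW m₁ m₂ f (chi m₁ m₂ γ) /
        innerW m₁ m₂ (chi m₁ m₂ γ) (chi m₁ m₂ γ)) * chi m₁ m₂ γ i = f i := by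
  obtain ⟨hK, hpar, horth, hind, hspan⟩ := id hΓ
  have hmem : (fun i : ↥(IdxF m₁ m₂) => f i.1) ∈
      Submodule.span ℂ (Set.range
        (fun γ : ↥Γ => fun i : ↥(IdxF m₁ m₂) => chi m₁ m₂ γ.1 i.1)) := by
    rw [hspan]; trivial
  rw [Submodule.mem_span_range_iff_exists_fun] at hmem
  obtain ⟨a, ha⟩ := hmem
  set b : ℤ × ℤ → ℂ := fun γ => if h : γ ∈ Γ then a ⟨γ, h⟩ else 0 with hb
  have hf : ∀ i ∈ IdxF m₁ m₂, f i = ∑ γ ∈ Γ, b γ * chi m₁ m₂ γ i := by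
    intro i hi
    have h := congrFun ha ⟨i, hi⟩
    simp only [Finset.sum_apply, Pi.smul_apply, smul_eq_mul] at h
    rw [← h, ← Finset.sum_coe_sort Γ (fun γ => b γ * chi m₁ m₂ γ i)]
    exact Finset.sum_congr rfl fun γ _ => by simp [hb, γ.2]
  have hkey : ∀ γ' ∈ Γ, innerW m₁ m₂ f (chi m₁ m₂ γ') =
      b γ' * innerW m₁ m₂ (chi m₁ m₂ γ') (chi m₁ m₂ γ') := by
    intro γ' hγ'
    have h1 : innerW m₁ m₂ f (chi m₁ m₂ γ') =
        ∑ γ ∈ Γ, b γ * innerW m₁ m₂ (chi m₁ m₂ γ) (chi m₁ m₂ γ') := by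
      calc innerW m₁ m₂ f (chi m₁ m₂ γ')
          = ∑ i ∈ IdxF m₁ m₂, ∑ γ ∈ Γ, b γ * ((wgt m₁ m₂ i : ℂ) * chi m₁ m₂ γ i *
              (starRingEnd ℂ) (chi m₁ m₂ γ' i)) := by
            unfold innerW
            refine Finset.sum_congr rfl fun i hi => ?_
            rw [hf i hi, Finset.mul_sum, Finset.sum_mul]
            exact Finset.sum_congr rfl fun γ _ => by ring
        _ = ∑ γ ∈ Γ, ∑ i ∈ IdxF m₁ m₂, b γ * ((wgt m₁ m₂ i : ℂ) * chi m₁ m₂ γ i *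
              (starRingEnd ℂ) (chi m₁ m₂ γ' i)) := Finset.sum_comm
        _ = ∑ γ ∈ Γ, b γ * innerW m₁ m₂ (chi m₁ m₂ γ) (chi m₁ m₂ γ') := by
            refine Finset.sum_congr rfl fun γ _ => ?_
            rw [← Finset.mul_sum]
            rfl
    rw [h1]
    exact Finset.sum_eq_single_of_mem γ' hγ'
      (fun γ hγ hne => by rw [horth γ hγ γ' hγ' hne, mul_zero])
  intro i hi
  have hterm : ∀ γ ∈ Γ, (innerW m₁ m₂ f (chi m₁ m₂ γ) /
      innerW m₁ m₂ (chi m₁ m₂ γ) (chi m₁ m₂ γ)) * chi m₁ m₂ γ i =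
      b γ * chi m₁ m₂ γ i := by
    intro γ hγ
    rw [hkey γ hγ, mul_div_assoc,
      div_self (norm_ne_zero m₁ m₂ hm₁ hm₂ Γ hΓ γ hγ), mul_one]
  rw [Finset.sum_congr rfl hterm, ← hf i hi]

lemma lag_sum (m₁ m₂ : ℕ) (Γ : Finset (ℤ × ℤ)) (f : ℤ × ℤ → ℂ) (p : ℝ × ℝ) :
    ∑ j ∈ IdxF m₁ m₂, f j * Lag m₁ m₂ Γ j p =
    ∑ γ ∈ Γ, (innerW m₁ m₂ f (chi m₁ m₂ γ) /
      innerW m₁ m₂ (chi m₁ m₂ γ) (chi m₁ m₂ γ)) * Xfun γ p := by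
  have hterm : ∀ j ∈ IdxF m₁ m₂, f j * Lag m₁ m₂ Γ j p =
      ∑ γ ∈ Γ, ((wgt m₁ m₂ j : ℂ) * f j * (starRingEnd ℂ) (chi m₁ m₂ γ j)) *
        (Xfun γ p / innerW m₁ m₂ (chi m₁ m₂ γ) (chi m₁ m₂ γ)) := by
    intro j hj
    unfold Lag
    rw [Finset.mul_sum, Finset.mul_sum]
    exact Finset.sum_congr rfl fun γ _ => by ring
  rw [Finset.sum_congr rfl hterm, Finset.sum_comm]
  refine Finset.sum_congr rfl fun γ _ => ?_
  rw [← Finset.sum_mul]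
  have : ∑ j ∈ IdxF m₁ m₂,
      (wgt m₁ m₂ j : ℂ) * f j * (starRingEnd ℂ) (chi m₁ m₂ γ j) =
      innerW m₁ m₂ f (chi m₁ m₂ γ) := rfl
  rw [this]
  ring

lemma interp (m₁ m₂ : ℕ) (hm₁ : 0 < m₁) (hm₂ : 0 < m₂)
    (Γ : Finset (ℤ × ℤ)) (hΓ : IsSpectral m₁ m₂ Γ) (f : ℤ × ℤ → ℂ) :
    ∀ i ∈ IdxF m₁ m₂,
      ∑ j ∈ IdxF m₁ m₂, f j * Lag m₁ m₂ Γ j (rI m₁ i.1, thetaI m₂ i.2) = f i := by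
  intro i hi
  rw [lag_sum]
  refine Eq.trans (Finset.sum_congr rfl fun γ _ => ?_)
    (coeff_eq m₁ m₂ hm₁ hm₂ Γ hΓ f i hi)
  rw [node_eval m₁ m₂ hm₁ γ i hi]

lemma uniq (m₁ m₂ : ℕ) (hm₁ : 0 < m₁) (hm₂ : 0 < m₂)
    (Γ : Finset (ℤ × ℤ)) (hΓ : IsSpectral m₁ m₂ Γ) (f : ℤ × ℤ → ℂ)
    (Q : ℝ × ℝ → ℂ) (hQ : Q ∈ Submodule.span ℂ (Xfun '' (Γ : Set (ℤ × ℤ))))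
    (hQi : ∀ i ∈ IdxF m₁ m₂, Q (rI m₁ i.1, thetaI m₂ i.2) = f i) :
    Q = fun p => ∑ i ∈ IdxF m₁ m₂, f i * Lag m₁ m₂ Γ i p := by
  set c : ℤ × ℤ → ℂ := fun γ => innerW m₁ m₂ f (chi m₁ m₂ γ) /
    innerW m₁ m₂ (chi m₁ m₂ γ) (chi m₁ m₂ γ) with hc
  have himg : Xfun '' (Γ : Set (ℤ × ℤ)) =
      Set.range (fun γ : ↥Γ => Xfun γ.1) := Set.image_eq_range _ _
  rw [himg, Submodule.mem_span_range_iff_exists_fun] at hQ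
  obtain ⟨bq, hbq⟩ := hQ
  have hd : ∀ i ∈ IdxF m₁ m₂,
      ∑ γ : ↥Γ, (bq γ - c γ.1) * chi m₁ m₂ γ.1 i = 0 := by
    intro i hi
    have h1 : ∑ γ : ↥Γ, bq γ * chi m₁ m₂ γ.1 i = f i := by
      have h := congrFun hbq (rI m₁ i.1, thetaI m₂ i.2)
      simp only [Finset.sum_apply, Pi.smul_apply, smul_eq_mul] at h
      rw [← hQi i hi, ← h]
      exact Finset.sum_congr rfl fun γ _ => by rw [node_eval m₁ m₂ hm₁ γ.1 i hi]
    have h2 : ∑ γ : ↥Γ, c γ.1 * chi m₁ m₂ γ.1 i = f i := by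
      rw [Finset.sum_coe_sort Γ (fun γ => c γ * chi m₁ m₂ γ i)]
      exact coeff_eq m₁ m₂ hm₁ hm₂ Γ hΓ f i hi
    simp only [sub_mul]
    rw [Finset.sum_sub_distrib, h1, h2, sub_self]
  have hz : ∀ γ : ↥Γ, bq γ - c γ.1 = 0 := by
    have hli := hΓ.2.2.2.1
    rw [Fintype.linearIndependent_iff] at hli
    apply hli
    funext i
    simp only [Finset.sum_apply, Pi.smul_apply, smul_eq_mul, Pi.zero_apply]
    exact hd i.1 i.2
  funext p
  rw [lag_sum m₁ m₂ Γ f p]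
  have : ∑ γ ∈ Γ, c γ * Xfun γ p = ∑ γ : ↥Γ, c γ.1 * Xfun γ.1 p :=
    (Finset.sum_coe_sort Γ (fun γ => c γ * Xfun γ p)).symm
  rw [show ∑ γ ∈ Γ, (innerW m₁ m₂ f (chi m₁ m₂ γ) /
      innerW m₁ m₂ (chi m₁ m₂ γ) (chi m₁ m₂ γ)) * Xfun γ p
      = ∑ γ ∈ Γ, c γ * Xfun γ p from rfl, this]
  have hQp := congrFun hbq p
  simp only [Finset.sum_apply, Pi.smul_apply, smul_eq_mul] at hQp
  rw [← hQp]
  exact Finset.sum_congr rfl fun γ _ => by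
    rw [sub_eq_zero.mp (hz γ)]

end Aux

/-- Theorem 6.1: unisolvence of spectral interpolation on the rhodonea nodes; the
unique interpolant in `Π^{(m)}` is the Lagrange sum, and the Lagrange functions
`L^{(m)}_i` form a basis of `Π^{(m)}`. -/
theorem spectral_interpolation_unisolvent (m₁ m₂ : ℕ) (hm₁ : 0 < m₁) (hm₂ : 0 < m₂)
    (Γ : Finset (ℤ × ℤ)) (hΓ : IsSpectral m₁ m₂ Γ) (f : ℤ × ℤ → ℂ) :
    (fun p => ∑ i ∈ IdxF m₁ m₂, f i * Lag m₁ m₂ Γ i p) ∈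
      Submodule.span ℂ (Xfun '' (Γ : Set (ℤ × ℤ))) ∧
    (∀ i ∈ IdxF m₁ m₂,
      (∑ j ∈ IdxF m₁ m₂, f j * Lag m₁ m₂ Γ j (rI m₁ i.1, thetaI m₂ i.2)) = f i) ∧
    (∀ Q : ℝ × ℝ → ℂ, Q ∈ Submodule.span ℂ (Xfun '' (Γ : Set (ℤ × ℤ))) →
      (∀ i ∈ IdxF m₁ m₂, Q (rI m₁ i.1, thetaI m₂ i.2) = f i) →
      Q = fun p => ∑ i ∈ IdxF m₁ m₂, f i * Lag m₁ m₂ Γ i p) ∧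
    LinearIndependent ℂ (fun i : ↥(IdxF m₁ m₂) => Lag m₁ m₂ Γ i.1) ∧
    Submodule.span ℂ (Set.range (fun i : ↥(IdxF m₁ m₂) => Lag m₁ m₂ Γ i.1)) =
      Submodule.span ℂ (Xfun '' (Γ : Set (ℤ × ℤ))) := by
  refine ⟨?_, interp m₁ m₂ hm₁ hm₂ Γ hΓ f,
    fun Q hQ hQi => uniq m₁ m₂ hm₁ hm₂ Γ hΓ f Q hQ hQi, ?_, ?_⟩
  · have hrw : (fun p => ∑ i ∈ IdxF m₁ m₂, f i * Lag m₁ m₂ Γ i p) =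
        ∑ γ ∈ Γ, (innerW m₁ m₂ f (chi m₁ m₂ γ) /
          innerW m₁ m₂ (chi m₁ m₂ γ) (chi m₁ m₂ γ)) • Xfun γ := by
      funext p
      simp only [Finset.sum_apply, Pi.smul_apply, smul_eq_mul]
      exact lag_sum m₁ m₂ Γ f p
    rw [hrw]
    exact Submodule.sum_mem _ fun γ hγ => Submodule.smul_mem _ _
      (Submodule.subset_span ⟨γ, Finset.mem_coe.mpr hγ, rfl⟩)
  · rw [Fintype.linearIndependent_iff]
    intro g hg j
    set g' : ℤ × ℤ → ℂ := fun k => if h : k ∈ IdxF m₁ m₂ then g ⟨k, h⟩ else 0 with hg'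
    have h1 := interp m₁ m₂ hm₁ hm₂ Γ hΓ g' j.1 j.2
    have h2 : ∑ k ∈ IdxF m₁ m₂,
        g' k * Lag m₁ m₂ Γ k (rI m₁ j.1.1, thetaI m₂ j.1.2) = 0 := by
      have h := congrFun hg (rI m₁ j.1.1, thetaI m₂ j.1.2)
      simp only [Finset.sum_apply, Pi.smul_apply, smul_eq_mul, Pi.zero_apply] at h
      rw [← h, ← Finset.sum_coe_sort (IdxF m₁ m₂)
        (fun k => g' k * Lag m₁ m₂ Γ k (rI m₁ j.1.1, thetaI m₂ j.1.2))]
      exact Finset.sum_congr rfl fun k _ => by simp [hg', k.2]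
    have h3 : g' j.1 = 0 := h1.symm.trans h2
    simpa [hg', j.2] using h3
  · apply le_antisymm
    · rw [Submodule.span_le]
      rintro _ ⟨i, rfl⟩
      have hrw : Lag m₁ m₂ Γ i.1 = ∑ γ ∈ Γ, ((wgt m₁ m₂ i.1 : ℂ) *
          ((starRingEnd ℂ) (chi m₁ m₂ γ i.1) /
            innerW m₁ m₂ (chi m₁ m₂ γ) (chi m₁ m₂ γ))) • Xfun γ := by
        funext p
        simp only [Finset.sum_apply, Pi.smul_apply, smul_eq_mul]
        unfold Lag
        rw [Finset.mul_sum]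
        exact Finset.sum_congr rfl fun γ _ => by ring
      show Lag m₁ m₂ Γ i.1 ∈ Submodule.span ℂ (Xfun '' (Γ : Set (ℤ × ℤ)))
      rw [hrw]
      exact Submodule.sum_mem _ fun γ hγ => Submodule.smul_mem _ _
        (Submodule.subset_span ⟨γ, Finset.mem_coe.mpr hγ, rfl⟩)
    · rw [Submodule.span_le]
      rintro _ ⟨γ, hγ, rfl⟩
      have hXi := uniq m₁ m₂ hm₁ hm₂ Γ hΓ (fun i => chi m₁ m₂ γ i) (Xfun γ)
        (Submodule.subset_span ⟨γ, hγ, rfl⟩)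
        (fun i hi => node_eval m₁ m₂ hm₁ γ i hi)
      have hrw : Xfun γ = ∑ i ∈ IdxF m₁ m₂, chi m₁ m₂ γ i • Lag m₁ m₂ Γ i := by
        rw [hXi]
        funext p
        simp only [Finset.sum_apply, Pi.smul_apply, smul_eq_mul]
      show Xfun γ ∈ Submodule.span ℂ (Set.range (fun i : ↥(IdxF m₁ m₂) => Lag m₁ m₂ Γ i.1))
      rw [hrw]
      exact Submodule.sum_mem _ fun i hi => Submodule.smul_mem _ _
        (Submodule.subset_span ⟨⟨i, hi⟩, rfl⟩)
end

section
/- Let m = (m₁,m₂) ∈ ℕ² and let Γ^{(m)}_□ = {γ ∈ ℤ² : 0 ≤ γ₁ ≤ 2m₁, −m₂ < γ₂ ≤ m₂, γ₁+γ₂ even}. Let 𝒻 : 𝔻 → ℂ be continuous on the unit disk, let f(i) = 𝒻(x^{(m)}_i) for i ∈ I^{(m)}, and let P^{(m)}_f be the unique interpolant of f in Π^{(m)}_□ = span{X_γ : γ ∈ Γ^{(m)}_□}. Then P^{(m)}_f is continuous at the center: P^{(m)}_f(0,θ) = 𝒻(0,0) for all θ ∈ [−π,π], so that P^{(m)}_f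 defines a continuous function on 𝔻. -/
open Complex Polynomial
open scoped Real

/-!
At `r = 0` every `X_γ` with `γ₁` odd vanishes, since `T_{γ₁}(0) = cos (γ₁ π / 2) = 0`, and the
parity condition leaves only the even angular frequencies in `(-m₂, m₂]`. There are `m₂` of them,
so `P(0, θ) - 𝒻(0, 0)` is `exp (i a θ)` times a polynomial of degree `< m₂` in `exp (2 i θ)`.
The `m₂` nodes with `i₁ = m₁` all lie at the origin, at angles spaced by `π / m₂`, so this
polynomial has `m₂` distinct roots and vanishes. Writing `P = ∑ c_γ X_γ`, the function
`z ↦ 𝒻(0, 0) + ∑ c_γ (T_{γ₁}(|z|) - T_{γ₁}(0)) (z / |z|)^{γ₂}` then agrees with `P` in polar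
coordinates, and each of its summands tends to `0` at `z = 0`.
-/

theorem exists_eq_sum_smul_of_mem_span_image {ι R M : Type*} [Semiring R] [AddCommMonoid M]
    [Module R M] {f : ι → M} {s : Finset ι} {x : M}
    (hx : x ∈ Submodule.span R (f '' s)) : ∃ c : ι → R, x = ∑ i ∈ s, c i • f i := by
  classical
  obtain ⟨c, hcs, rfl⟩ := Finsupp.mem_span_image_iff_linearCombination R |>.mp hx
  exact ⟨c, Finsupp.linearCombination_apply_of_mem_supported R hcs⟩

def trigModes (a : ℤ) (n : ℕ) : Set (ℝ → ℂ) :=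
  (fun j : ℕ => fun θ : ℝ => exp (I * ((a + 2 * j : ℤ) * θ))) '' Set.Iio n

theorem exists_polynomial_of_mem_span_trigModes {a : ℤ} {n : ℕ} {f : ℝ → ℂ}
    (hf : f ∈ Submodule.span ℂ (trigModes a n)) :
    ∃ Q ∈ degreeLT ℂ n, ∀ θ : ℝ, f θ = exp (I * (a * θ)) * Q.eval (exp (2 * θ * I)) := by
  let L : ℂ[X] →ₗ[ℂ] ℝ → ℂ :=
    LinearMap.pi fun θ : ℝ => exp (I * (a * θ)) • leval (exp (2 * θ * I))
  have hspan : Submodule.span ℂ (trigModes a n) ≤ (degreeLT ℂ n).map L := by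
    rw [Submodule.span_le]
    rintro _ ⟨j, hj, rfl⟩
    refine ⟨X ^ j, mem_degreeLT.mpr ?_, funext fun θ => ?_⟩
    · simpa using hj
    · simp only [L, LinearMap.pi_apply, LinearMap.smul_apply, leval_apply, eval_pow, eval_X,
        smul_eq_mul, ← exp_nat_mul, ← exp_add]
      congr 1
      push_cast
      ring
  obtain ⟨Q, hQ, rfl⟩ := hspan hf
  exact ⟨Q, hQ, fun θ => rfl⟩

theorem injOn_exp_equispaced (θ₀ : ℝ) (n : ℕ) :
    Set.InjOn (fun l : ℕ => exp (2 * (θ₀ + l * π / n : ℝ) * I)) (Finset.range n) := by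
  intro l hl l' hl' h
  have hn : n ≠ 0 := by simp at hl; omega
  have hpow (k : ℕ) : exp (2 * (θ₀ + k * π / n : ℝ) * I) =
      exp (2 * θ₀ * I) * exp (2 * π * I / n) ^ k := by
    rw [← exp_nat_mul, ← exp_add]
    congr 1
    push_cast
    ring
  simp only [hpow] at h
  exact (isPrimitiveRoot_exp n hn).pow_inj (by simpa using hl) (by simpa using hl')
    (mul_left_cancel₀ (exp_ne_zero _) h)

theorem eq_zero_of_mem_span_trigModes {a : ℤ} {n : ℕ} {f : ℝ → ℂ}
    (hf : f ∈ Submodule.span ℂ (trigModes a n)) (θ₀ : ℝ)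
    (hzero : ∀ l < n, f (θ₀ + l * π / n) = 0) : f = 0 := by
  obtain ⟨Q, hQ, hfQ⟩ := exists_polynomial_of_mem_span_trigModes hf
  have hQ0 : Q = 0 := by
    refine eq_zero_of_degree_lt_of_eval_index_eq_zero _ (injOn_exp_equispaced θ₀ n)
      (by simpa using mem_degreeLT.mp hQ) fun l hl => ?_
    have := hzero l (by simpa using hl)
    rw [hfQ] at this
    exact (mul_eq_zero.mp this).resolve_left (exp_ne_zero _)
  funext θ
  simp [hfQ, hQ0]

theorem Real.cos_mul_pi_div_two_of_odd {k : ℤ} (hk : Odd k) : Real.cos (k * (π / 2)) = 0 := by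
  obtain ⟨j, rfl⟩ := hk
  exact Real.cos_eq_zero_iff.mpr ⟨j, by push_cast; ring⟩

/-- `2 - m - m % 2` is the least even integer above `-m`. -/
theorem exp_mem_trigModes {m : ℕ} {k : ℤ} (hk : Even k) (hlo : -(m : ℤ) < k) (hhi : k ≤ m) :
    (fun θ : ℝ => exp (I * (k * θ))) ∈ trigModes (2 - m - m % 2) m := by
  set j := ((k - (2 - m - m % 2)) / 2).toNat
  have hj : (2 - m - m % 2 : ℤ) + 2 * (j : ℤ) = k := by obtain ⟨r, rfl⟩ := hk; omega
  refine ⟨j, ?_, ?_⟩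
  · simp only [Set.mem_Iio]; omega
  · simp only [hj]

theorem center_mem_span_trigModes {m₁ m₂ : ℕ} {P : ℝ × ℝ → ℂ}
    (hP : P ∈ Submodule.span ℂ (Xfun '' (GammaSq m₁ m₂ : Set (ℤ × ℤ)))) :
    (fun θ : ℝ => P (0, θ)) ∈ Submodule.span ℂ (trigModes (2 - m₂ - m₂ % 2) m₂) := by
  let restrict := LinearMap.funLeft ℂ ℂ fun θ : ℝ => ((0 : ℝ), θ)
  suffices Submodule.span ℂ (Xfun '' (GammaSq m₁ m₂ : Set (ℤ × ℤ))) ≤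
      (Submodule.span ℂ (trigModes (2 - m₂ - m₂ % 2) m₂)).comap restrict from this hP
  rw [Submodule.span_le]
  rintro _ ⟨γ, hγ, rfl⟩
  simp only [GammaSq, Finset.coe_filter, Finset.mem_product, Finset.mem_Icc, Finset.mem_Ioc] at hγ
  obtain ⟨⟨-, hlo, hhi⟩, hpar⟩ := hγ
  have hX : restrict (Xfun γ) =
      (Real.cos (γ.1 * (π / 2)) : ℂ) • fun θ : ℝ => exp (I * (γ.2 * θ)) := by
    funext θ
    simp [restrict, Xfun, Real.arccos_zero]
  rw [SetLike.mem_coe, Submodule.mem_comap, hX]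
  rcases Int.even_or_odd γ.1 with h1 | h1
  · exact Submodule.smul_mem _ _
      (Submodule.subset_span (exp_mem_trigModes ((Int.even_add.mp hpar).mp h1) hlo hhi))
  · rw [Real.cos_mul_pi_div_two_of_odd h1, ofReal_zero, zero_smul]
    exact zero_mem _

theorem center_eq_of_eq_at_center_nodes {m₁ m₂ : ℕ} (hm₂ : 0 < m₂) {P : ℝ × ℝ → ℂ}
    (hP : P ∈ Submodule.span ℂ (Xfun '' (GammaSq m₁ m₂ : Set (ℤ × ℤ)))) {v : ℂ}
    (hnodes : ∀ i ∈ IdxF m₁ m₂, i.1 = m₁ → P (0, thetaI m₂ i.2) = v) (θ : ℝ) :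
    P (0, θ) = v := by
  have hconst : (fun _ : ℝ => v) ∈ Submodule.span ℂ (trigModes (2 - m₂ - m₂ % 2) m₂) := by
    convert Submodule.smul_mem _ v <| Submodule.subset_span <|
      exp_mem_trigModes (m := m₂) (k := 0) Even.zero (by omega) (by omega) using 1
    funext θ
    simp
  let i₀ : ℤ := 2 - 2 * m₂ - m₁ % 2
  suffices (fun θ : ℝ => P (0, θ)) - (fun _ => v) = 0 from sub_eq_zero.mp (congrFun this θ)
  refine eq_zero_of_mem_span_trigModes (sub_mem (center_mem_span_trigModes hP) hconst)
    (thetaI m₂ i₀) fun l hl => ?_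
  have hnode : ((m₁ : ℤ), i₀ + 2 * l) ∈ IdxF m₁ m₂ := by
    simp only [IdxF, Finset.mem_filter, Finset.mem_product, Finset.mem_Icc, Finset.mem_Ioc,
      Int.even_iff]
    omega
  have hθ : thetaI m₂ (i₀ + 2 * l) = thetaI m₂ i₀ + l * π / m₂ := by
    simp only [thetaI]
    push_cast
    field_simp
  simp [← hθ, hnodes _ hnode rfl]

/-- At `z = 0` the quotient is the junk value `0`, and `0 ^ n` is `0` or `1`. -/
theorem norm_div_norm_zpow_le_one (z : ℂ) (n : ℤ) : ‖(z / ‖z‖) ^ n‖ ≤ 1 := by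
  rcases eq_or_ne z 0 with rfl | hz
  · rcases eq_or_ne n 0 with rfl | hn <;> simp [zero_zpow, *]
  · rw [norm_zpow, norm_div, norm_real, norm_norm, div_self (norm_ne_zero_iff.mpr hz), one_zpow]

theorem continuous_mul_div_norm_zpow {a : ℝ → ℂ} (ha : Continuous a) (ha0 : a 0 = 0) (n : ℤ) :
    Continuous fun z : ℂ => a ‖z‖ * (z / ‖z‖) ^ n := by
  rw [continuous_iff_continuousAt]
  intro z
  rcases eq_or_ne z 0 with rfl | hz
  · have hnorm : Filter.Tendsto (fun w : ℂ => ‖a ‖w‖‖) (nhds 0) (nhds 0) := by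
      simpa [ha0] using (ha.comp continuous_norm).norm.tendsto (0 : ℂ)
    simp only [ContinuousAt, norm_zero, ha0, zero_mul]
    refine squeeze_zero_norm (fun w => ?_) hnorm
    rw [norm_mul]
    exact mul_le_of_le_one_right (norm_nonneg _) (norm_div_norm_zpow_le_one w n)
  · have hnz : (‖z‖ : ℂ) ≠ 0 := ofReal_ne_zero.mpr (norm_ne_zero_iff.mpr hz)
    exact (ha.comp continuous_norm).continuousAt.mul
      ((continuousAt_id.div (continuous_ofReal.comp continuous_norm).continuousAt hnz).zpow₀ n
        (Or.inl (div_ne_zero hz hnz)))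

theorem exists_continuous_eq_polar_sum {ι : Type*} (s : Finset ι) {a : ι → ℝ → ℂ}
    (ha : ∀ i ∈ s, Continuous (a i)) (n : ι → ℤ) {v : ℂ}
    (hcenter : ∀ θ : ℝ, ∑ i ∈ s, a i 0 * exp (I * (n i * θ)) = v) :
    ∃ G : ℂ → ℂ, Continuous G ∧ ∀ r : ℝ, 0 ≤ r → ∀ θ : ℝ,
      G (r * exp (θ * I)) = ∑ i ∈ s, a i r * exp (I * (n i * θ)) := by
  refine ⟨fun z => v + ∑ i ∈ s, (a i ‖z‖ - a i 0) * (z / ‖z‖) ^ n i, ?_, fun r hr θ => ?_⟩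
  · exact continuous_const.add <| continuous_finsetSum _ fun i hi =>
      continuous_mul_div_norm_zpow ((ha i hi).sub continuous_const) (sub_self _) (n i)
  rcases hr.eq_or_lt with rfl | hr
  · simp [← hcenter θ]
  · have hnorm : ‖(r : ℂ) * exp (θ * I)‖ = r := by
      rw [norm_mul, norm_exp_ofReal_mul_I, norm_real, Real.norm_of_nonneg hr.le, mul_one]
    have hdir (k : ℤ) : ((r : ℂ) * exp (θ * I) / r) ^ k = exp (I * (k * θ)) := by
      rw [mul_div_cancel_left₀ _ (ofReal_ne_zero.mpr hr.ne'), ← exp_int_mul]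
      ring_nf
    simp only [hnorm, hdir, sub_mul, Finset.sum_sub_distrib, ← hcenter θ]
    ring

theorem rI_self {m₁ : ℕ} (hm₁ : 0 < m₁) : rI m₁ m₁ = 0 := by
  rw [rI, ← Real.cos_pi_div_two]
  congr 1
  field_simp
  norm_cast

theorem interpolant_continuous_at_center_general (m₁ m₂ : ℕ) (hm₁ : 0 < m₁) (hm₂ : 0 < m₂)
    (F : ℝ × ℝ → ℂ) (P : ℝ × ℝ → ℂ)
    (hPmem : P ∈ Submodule.span ℂ (Xfun '' (GammaSq m₁ m₂ : Set (ℤ × ℤ))))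
    (hInterp : ∀ i ∈ IdxF m₁ m₂, P (rI m₁ i.1, thetaI m₂ i.2) = F (node m₁ m₂ i)) :
    (∀ θ ∈ Set.Icc (-Real.pi) Real.pi, P (0, θ) = F (0, 0)) ∧
    ∃ G : ℝ × ℝ → ℂ, ContinuousOn G closedDisk ∧
      ∀ r ∈ Set.Icc (0 : ℝ) 1, ∀ θ ∈ Set.Ioc (-Real.pi) Real.pi,
        G (r * Real.cos θ, r * Real.sin θ) = P (r, θ) := by
  have hcenter : ∀ θ : ℝ, P (0, θ) = F (0, 0) :=
    center_eq_of_eq_at_center_nodes hm₂ hPmem fun i hi h₁ => by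
      simpa [h₁, rI_self hm₁, node] using hInterp i hi
  obtain ⟨c, rfl⟩ := exists_eq_sum_smul_of_mem_span_image hPmem
  obtain ⟨G, hG, hGP⟩ := exists_continuous_eq_polar_sum (GammaSq m₁ m₂)
    (a := fun γ r => c γ * Real.cos (γ.1 * Real.arccos r)) (fun γ _ => by fun_prop) Prod.snd
    (v := F (0, 0)) fun θ => by simpa [Xfun, mul_assoc] using hcenter θ
  refine ⟨fun θ _ => hcenter θ, fun x => G (x.1 + x.2 * I), (hG.comp (by fun_prop)).continuousOn,
    fun r hr θ _ => ?_⟩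
  have hpolar : ((r * Real.cos θ : ℝ) : ℂ) + (r * Real.sin θ : ℝ) * I = r * exp (θ * I) := by
    rw [exp_mul_I]
    push_cast
    ring
  dsimp only
  rw [hpolar, hGP r hr.1 θ, Finset.sum_apply]
  simp [Xfun, mul_assoc]

/-- Theorem 8.1: for a continuous function on the disk, the interpolant in
`Π^{(m)}_□` is constant (equal to the center value) on the line `r = 0` and hence
defines a continuous function on the closed disk. -/
theorem interpolant_continuous_at_center (m₁ m₂ : ℕ) (hm₁ : 0 < m₁) (hm₂ : 0 < m₂)
    (F : ℝ × ℝ → ℂ) (hF : ContinuousOn F closedDisk) (P : ℝ × ℝ → ℂ)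
    (hPmem : P ∈ Submodule.span ℂ (Xfun '' (GammaSq m₁ m₂ : Set (ℤ × ℤ))))
    (hInterp : ∀ i ∈ IdxF m₁ m₂, P (rI m₁ i.1, thetaI m₂ i.2) = F (node m₁ m₂ i)) :
    (∀ θ ∈ Set.Icc (-Real.pi) Real.pi, P (0, θ) = F (0, 0)) ∧
    ∃ G : ℝ × ℝ → ℂ, ContinuousOn G closedDisk ∧
      ∀ r ∈ Set.Icc (0 : ℝ) 1, ∀ θ ∈ Set.Ioc (-Real.pi) Real.pi,
        G (r * Real.cos θ, r * Real.sin θ) = P (r, θ) :=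
  interpolant_continuous_at_center_general m₁ m₂ hm₁ hm₂ F P hPmem hInterp
end
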